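/- arXiv:math/0605587 — 3 statements merged into one kernel-verified Lean document; each statement's English description precedes it below -/
import Mathlib

section
/- Let G be a compact Lie group with Lie algebra 𝔤 and G_X = {g | Ad(g)X = X}. If (V, c, V̄, c̄, X) satisfies: all entries of V and of c V̄ c^{-1} lie in G_X, 𝔪(V) = exp(X/2)·c·c̄, and 𝔪(V̄) = c̄·exp(-X/2)·c, then 𝔪(V)·𝔪(c·𝔯(V̄)·c^{-1}) = exp(X). In particular (V, c·𝔯(V̄)·c^{-1}, X) lies in the Yang–Mills representation variety X^{2ℓ,0}_{YM}(G) = {(V₁,V₂,X) ∈ (G_X)^{2ℓ} × (G_X)^{2ℓ} × 𝔤 | 𝔪(V₁)·𝔪(V₂) = exp(X)}. -/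
/-- Abstraction of a Lie group `G` with Lie algebra `𝔤`, exponential map `exp`,
and adjoint representation `Ad`, satisfying the standard identities
`exp (Ad g X) = g * exp X * g⁻¹` and one-parameter subgroup additivity. -/
structure LieExpAd (G 𝔤 : Type*) [Group G] [TopologicalSpace G]
    [AddCommGroup 𝔤] [Module ℝ 𝔤] where
  exp : 𝔤 → G
  Ad : G →* (𝔤 ≃ₗ[ℝ] 𝔤)
  exp_Ad : ∀ (g : G) (X : 𝔤), exp (Ad g X) = g * exp X * g⁻¹
  exp_add_smul : ∀ (r s : ℝ) (X : 𝔤), exp ((r + s) • X) = exp (r • X) * exp (s • X)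

variable {G 𝔤 : Type*} [Group G] [TopologicalSpace G] [IsTopologicalGroup G]
  [AddCommGroup 𝔤] [Module ℝ 𝔤]

open scoped commutatorElement

/-- `𝔪(a₁,b₁,…,a_ℓ,b_ℓ) = ∏ᵢ [aᵢ,bᵢ]` (ordered product of commutators). -/
def mm {ℓ : ℕ} (V : Fin ℓ → G × G) : G :=
  (List.ofFn fun i => ⁅(V i).1, (V i).2⁆).prod

/-- `𝔯(a₁,b₁,…,a_ℓ,b_ℓ) = (b_ℓ,a_ℓ,…,b₁,a₁)`. -/
def rr {ℓ : ℕ} (V : Fin ℓ → G × G) : Fin ℓ → G × G :=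
  fun i => ((V i.rev).2, (V i.rev).1)

/-- Entrywise conjugation `g V g⁻¹` of a tuple. -/
def conjT {ℓ : ℕ} (g : G) (V : Fin ℓ → G × G) : Fin ℓ → G × G :=
  fun i => (g * (V i).1 * g⁻¹, g * (V i).2 * g⁻¹)

/-- The adjoint stabilizer `G_X = {g | Ad(g)X = X}`. -/
def stab (L : LieExpAd G 𝔤) (X : 𝔤) : Set G := {g | L.Ad g X = X}

/-- All entries of the tuple `V` lie in `G_X`. -/
def tupleStab (L : LieExpAd G 𝔤) (X : 𝔤) {ℓ : ℕ} (V : Fin ℓ → G × G) : Prop :=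
  ∀ i, (V i).1 ∈ stab L X ∧ (V i).2 ∈ stab L X

/-- Membership in the symmetric representation variety `Z^{ℓ,1}_{YM}(G)`. -/
def memZ1 (L : LieExpAd G 𝔤) {ℓ : ℕ} (V : Fin ℓ → G × G) (c : G)
    (Vb : Fin ℓ → G × G) (cb : G) (X : 𝔤) : Prop :=
  tupleStab L X V ∧ tupleStab L X (conjT c Vb) ∧
  mm V = L.exp ((1/2 : ℝ) • X) * (c * cb) ∧
  mm Vb = cb * L.exp (-((1/2 : ℝ) • X)) * c

/-- Membership in the symmetric representation variety `Z^{ℓ,2}_{YM}(G)`. -/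
def memZ2 (L : LieExpAd G 𝔤) {ℓ : ℕ} (V : Fin ℓ → G × G) (d c : G)
    (Vb : Fin ℓ → G × G) (db cb : G) (X : 𝔤) : Prop :=
  tupleStab L X V ∧ tupleStab L X (conjT (d⁻¹ * c) Vb) ∧
  d⁻¹ ∈ stab L X ∧ c * cb ∈ stab L X ∧
  mm V = L.exp ((1/2 : ℝ) • X) * (c * db * c⁻¹ * d) ∧
  mm Vb = cb * d * L.exp (-((1/2 : ℝ) • X)) * cb⁻¹ * db

/-! If `𝔪(V) = exp(X/2)·k` with `k = c c̄` and `𝔪(V) ∈ G_X`, then `𝔪(V)` commutes with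
`exp(X/2) = exp(Ad(𝔪 V)(X/2)) = 𝔪(V) exp(X/2) 𝔪(V)⁻¹`, hence so does `k`. Since `𝔯` inverts `𝔪`
and conjugation commutes with `𝔪`, the product is `exp(X/2)·k·exp(X/2)·k⁻¹ = exp(X/2)² = exp X`. -/

theorem List.ofFn_comp_rev {α : Type*} {n : ℕ} (f : Fin n → α) :
    List.ofFn (fun i => f i.rev) = (List.ofFn f).reverse := by
  refine List.ext_getElem (by simp) fun i _ _ => ?_
  simp only [List.getElem_ofFn, List.getElem_reverse, List.length_ofFn]
  congr 1
  ext
  simp only [Fin.val_rev]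
  omega

omit [TopologicalSpace G] [IsTopologicalGroup G] in
theorem mm_conjT {ℓ : ℕ} (g : G) (W : Fin ℓ → G × G) :
    mm (conjT g W) = g * mm W * g⁻¹ := by
  have hconj : ∀ a : G, g * a * g⁻¹ = MulAut.conj g a := fun _ => rfl
  simp only [mm, conjT, hconj, ← map_commutatorElement]
  rw [map_list_prod, List.map_ofFn]
  rfl

omit [TopologicalSpace G] [IsTopologicalGroup G] in
theorem mm_rr {ℓ : ℕ} (W : Fin ℓ → G × G) : mm (rr W) = (mm W)⁻¹ := by
  simp only [mm, rr, List.prod_inv_reverse, List.map_ofFn, ← List.ofFn_comp_rev,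
    Function.comp_def, commutatorElement_inv]

omit [IsTopologicalGroup G] in
theorem LieExpAd.exp_neg (L : LieExpAd G 𝔤) (X : 𝔤) : L.exp (-X) = (L.exp X)⁻¹ := by
  have h0 : L.exp 0 = 1 := by
    simpa using L.exp_add_smul 0 0 X
  refine eq_inv_of_mul_eq_one_left ?_
  simpa [h0] using (L.exp_add_smul (-1) 1 X).symm

omit [IsTopologicalGroup G] in
theorem LieExpAd.exp_half_mul_exp_half (L : LieExpAd G 𝔤) (X : 𝔤) :
    L.exp ((1/2 : ℝ) • X) * L.exp ((1/2 : ℝ) • X) = L.exp X := by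
  rw [← L.exp_add_smul, add_halves, one_smul]

omit [IsTopologicalGroup G] in
theorem LieExpAd.commute_exp_of_Ad_eq (L : LieExpAd G 𝔤) {g : G} {X : 𝔤} (h : L.Ad g X = X) :
    Commute g (L.exp X) := by
  have := L.exp_Ad g X
  rw [h, eq_mul_inv_iff_mul_eq] at this
  exact this.symm

def stabSubgroup (L : LieExpAd G 𝔤) (X : 𝔤) : Subgroup G :=
  (MulAction.stabilizer (𝔤 ≃ₗ[ℝ] 𝔤) X).comap L.Ad

omit [IsTopologicalGroup G] in
theorem coe_stabSubgroup (L : LieExpAd G 𝔤) (X : 𝔤) : (stabSubgroup L X : Set G) = stab L X :=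
  rfl

omit [IsTopologicalGroup G] in
theorem mm_mem_stab (L : LieExpAd G 𝔤) (X : 𝔤) {ℓ : ℕ} {W : Fin ℓ → G × G}
    (hW : tupleStab L X W) : mm W ∈ stab L X := by
  rw [← coe_stabSubgroup]
  refine list_prod_mem fun x hx => ?_
  obtain ⟨i, rfl⟩ := List.mem_ofFn.mp hx
  obtain ⟨ha, hb⟩ := hW i
  rw [← coe_stabSubgroup] at ha hb
  rw [commutatorElement_def]
  exact mul_mem (mul_mem (mul_mem ha hb) (inv_mem ha)) (inv_mem hb)

omit [TopologicalSpace G] [IsTopologicalGroup G] in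
theorem conjT_rr {ℓ : ℕ} (g : G) (W : Fin ℓ → G × G) : conjT g (rr W) = rr (conjT g W) :=
  rfl

omit [IsTopologicalGroup G] in
theorem tupleStab_rr (L : LieExpAd G 𝔤) (X : 𝔤) {ℓ : ℕ} {W : Fin ℓ → G × G}
    (hW : tupleStab L X W) : tupleStab L X (rr W) :=
  fun i => (hW i.rev).symm

theorem phi_into_ym_general (L : LieExpAd G 𝔤) {ℓ : ℕ}
    (V Vb : Fin ℓ → G × G) (c cb : G) (X : 𝔤)
    (hV : tupleStab L X V) (hVb : tupleStab L X (conjT c Vb))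
    (h1 : mm V = L.exp ((1/2 : ℝ) • X) * (c * cb))
    (h2 : mm Vb = cb * L.exp (-((1/2 : ℝ) • X)) * c) :
    mm V * mm (conjT c (rr Vb)) = L.exp X ∧
    tupleStab L X V ∧ tupleStab L X (conjT c (rr Vb)) := by
  rw [L.exp_neg] at h2
  set E := L.exp ((1/2 : ℝ) • X)
  have hVE : Commute (mm V) E :=
    L.commute_exp_of_Ad_eq (by rw [map_smul, mm_mem_stab L X hV])
  have hcE : Commute (c * cb) E := by
    have := (Commute.inv_left (Commute.refl E)).mul_left hVE
    rwa [h1, inv_mul_cancel_left] at this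
  refine ⟨?_, hV, conjT_rr c Vb ▸ tupleStab_rr L X hVb⟩
  calc mm V * mm (conjT c (rr Vb)) = E * ((c * cb) * E * (c * cb)⁻¹) := by
        rw [mm_conjT, mm_rr, h1, h2]; group
    _ = L.exp X := by rw [hcE.eq, mul_inv_cancel_right, L.exp_half_mul_exp_half]

/-- `Φ` maps `Z^{ℓ,1}_{YM}(G)` into `X^{2ℓ,0}_{YM}(G)`:
`𝔪(V)·𝔪(c 𝔯(V̄) c⁻¹) = exp X`, and `(V, c 𝔯(V̄) c⁻¹, X)` has entries in `G_X`. -/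
theorem phi_into_ym [CompactSpace G] (L : LieExpAd G 𝔤) {ℓ : ℕ}
    (V Vb : Fin ℓ → G × G) (c cb : G) (X : 𝔤)
    (hV : tupleStab L X V) (hVb : tupleStab L X (conjT c Vb))
    (h1 : mm V = L.exp ((1/2 : ℝ) • X) * (c * cb))
    (h2 : mm Vb = cb * L.exp (-((1/2 : ℝ) • X)) * c) :
    mm V * mm (conjT c (rr Vb)) = L.exp X ∧
    tupleStab L X V ∧ tupleStab L X (conjT c (rr Vb)) :=
  phi_into_ym_general L V Vb c cb X hV hVb h1 h2
end

section
/- Let G be a compact Lie group with Lie algebra 𝔤. Define τ(V, c, V̄, c̄, X) = (V̄, c̄, V, c, -Ad(c̄)(X)). Then τ maps Z^{ℓ,1}_{YM}(G) into itself. -/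
variable {G 𝔤 : Type*} [Group G] [TopologicalSpace G] [IsTopologicalGroup G]
  [AddCommGroup 𝔤] [Module ℝ 𝔤]

open scoped commutatorElement

/-! Write `A = exp (X/2)`. Every element of `G_X` commutes with `A`, since `Ad` fixes `X/2` and
`exp ∘ Ad g = g · exp · g⁻¹`; so `c c̄ = A⁻¹ 𝔪(V)` normalizes `G_X` and commutes with `A`.
As `G_{-Ad(c̄) X} = c̄ G_X c̄⁻¹`, the new stabilizer conditions say that `V` and
`c̄⁻¹ V̄ c̄ = (c c̄)⁻¹ (c V̄ c⁻¹) (c c̄)` have entries in `G_X`, and the two product relations trade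
places because `exp (Ad c̄ Y) = c̄ exp Y c̄⁻¹`. -/

section
variable {G : Type*} [Group G] {ℓ : ℕ}

theorem conjT_mul (g h : G) (V : Fin ℓ → G × G) : conjT (g * h) V = conjT g (conjT h V) := by
  ext i <;> simp only [conjT] <;> group

theorem conjT_one (V : Fin ℓ → G × G) : conjT 1 V = V := by
  ext i <;> simp only [conjT, one_mul, inv_one, mul_one]

end

namespace LieExpAd

section
variable {G 𝔤 : Type*} [Group G] [TopologicalSpace G] [AddCommGroup 𝔤] [Module ℝ 𝔤]
  (L : LieExpAd G 𝔤)

theorem exp_smul_Ad (g : G) (r : ℝ) (X : 𝔤) :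
    L.exp (r • L.Ad g X) = g * L.exp (r • X) * g⁻¹ := by
  rw [← map_smul, exp_Ad]

theorem exp_zero_smul (X : 𝔤) : L.exp ((0 : ℝ) • X) = 1 := by
  have h := L.exp_add_smul 0 0 X
  rw [zero_add] at h
  exact left_eq_mul.mp h

theorem exp_neg_smul (r : ℝ) (X : 𝔤) : L.exp (-(r • X)) = (L.exp (r • X))⁻¹ := by
  have h := L.exp_add_smul r (-r) X
  rw [add_neg_cancel, exp_zero_smul, neg_smul] at h
  exact eq_inv_of_mul_eq_one_right h.symm

def stabilizer (X : 𝔤) : Subgroup G :=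
  (MulAction.stabilizer (𝔤 ≃ₗ[ℝ] 𝔤) X).comap L.Ad

theorem mem_stab_neg {X : 𝔤} {g : G} : g ∈ stab L (-X) ↔ g ∈ stab L X := by
  simp only [stab, Set.mem_ofPred_eq, map_neg, neg_inj]

theorem mem_stab_Ad {X : 𝔤} {g h : G} : g ∈ stab L (L.Ad h X) ↔ h⁻¹ * g * h ∈ stab L X := by
  change L.Ad g (L.Ad h X) = L.Ad h X ↔ L.Ad (h⁻¹ * g * h) X = X
  conv_rhs => rw [← (L.Ad h).injective.eq_iff]
  simp only [← LinearEquiv.mul_apply, ← map_mul, mul_assoc, mul_inv_cancel_left]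

theorem exp_smul_mem_centralizer (r : ℝ) (X : 𝔤) :
    L.exp (r • X) ∈ Subgroup.centralizer (L.stabilizer X) := by
  intro g hg
  have hgX : L.Ad g (r • X) = r • X := by rw [map_smul, show L.Ad g X = X from hg]
  rw [← mul_inv_eq_iff_eq_mul, ← exp_Ad, hgX]

variable {L} {X : 𝔤} {ℓ : ℕ} {V : Fin ℓ → G × G}

theorem tupleStab_neg : tupleStab L (-X) V ↔ tupleStab L X V := by
  simp only [tupleStab, mem_stab_neg]

theorem tupleStab_Ad {g : G} : tupleStab L (L.Ad g X) V ↔ tupleStab L X (conjT g⁻¹ V) := by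
  simp only [tupleStab, mem_stab_Ad, conjT, inv_inv]

theorem tupleStab_conjT_of_mem_normalizer {g : G}
    (hg : g ∈ Subgroup.normalizer (L.stabilizer X : Set G)) (hV : tupleStab L X V) :
    tupleStab L X (conjT g V) :=
  fun i => ⟨(Subgroup.mem_normalizer_iff.mp hg _).mp (hV i).1,
    (Subgroup.mem_normalizer_iff.mp hg _).mp (hV i).2⟩

theorem mm_mem_stabilizer (hV : tupleStab L X V) :
    mm V ∈ L.stabilizer X := by
  refine Subgroup.list_prod_mem _ fun x hx => ?_
  obtain ⟨i, rfl⟩ := List.mem_ofFn.mp hx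
  have ⟨ha, hb⟩ := hV i
  rw [commutatorElement_def]
  exact mul_mem (mul_mem (mul_mem ha hb) (inv_mem ha)) (inv_mem hb)

end

end LieExpAd

open LieExpAd in
theorem tau_maps_Z1_general (L : LieExpAd G 𝔤) {ℓ : ℕ}
    (V Vb : Fin ℓ → G × G) (c cb : G) (X : 𝔤)
    (h : memZ1 L V c Vb cb X) :
    memZ1 L Vb cb V c (-(L.Ad cb X)) := by
  obtain ⟨hV, hcVb, hmV, hmVb⟩ := h
  set A := L.exp ((1/2 : ℝ) • X)
  have hA : A ∈ Subgroup.centralizer (L.stabilizer X) := L.exp_smul_mem_centralizer _ X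
  have hmV_mem : mm V ∈ L.stabilizer X := mm_mem_stabilizer hV
  have hccb : c * cb = A⁻¹ * mm V := by rw [hmV, inv_mul_cancel_left]
  have hccb_norm : c * cb ∈ Subgroup.normalizer (L.stabilizer X : Set G) := by
    rw [hccb]
    exact mul_mem (Subgroup.centralizer_le_normalizer _ (inv_mem hA))
      (Subgroup.le_normalizer hmV_mem)
  have hA_comm : Commute A (c * cb) :=
    (IsLeftRegular.all A).commute_mul_left_iff.mp (hmV ▸ hA _ hmV_mem)
  refine ⟨?_, ?_, ?_, ?_⟩
  · have : conjT cb⁻¹ Vb = conjT (c * cb)⁻¹ (conjT c Vb) := by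
      rw [← conjT_mul, mul_inv_rev, inv_mul_cancel_right]
    rw [tupleStab_neg, tupleStab_Ad, this]
    exact tupleStab_conjT_of_mem_normalizer (inv_mem hccb_norm) hcVb
  · rw [tupleStab_neg, tupleStab_Ad, ← conjT_mul, inv_mul_cancel, conjT_one]
    exact hV
  · rw [smul_neg, exp_neg_smul, exp_smul_Ad, hmVb, exp_neg_smul]
    group
  · rw [smul_neg, neg_neg, exp_smul_Ad]
    change mm V = c * (cb * A * cb⁻¹) * cb
    rw [hmV, hA_comm.eq]
    group

/-- `τ(V,c,V̄,c̄,X) = (V̄,c̄,V,c,-Ad(c̄)X)` maps `Z^{ℓ,1}_{YM}(G)`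
into itself. -/
theorem tau_maps_Z1 [CompactSpace G] (L : LieExpAd G 𝔤) {ℓ : ℕ}
    (V Vb : Fin ℓ → G × G) (c cb : G) (X : 𝔤)
    (h : memZ1 L V c Vb cb X) :
    memZ1 L Vb cb V c (-(L.Ad cb X)) :=
  tau_maps_Z1_general L V Vb c cb X h
end

section
/- Let G be a compact Lie group with Lie algebra 𝔤, and let τ on G^{2ℓ}×G×G^{2ℓ}×G×𝔤 be τ(V,c,V̄,c̄,X) = (V̄,c̄,V,c,-Ad(c̄)X). The map (V, c, X) ↦ (V, c, V, c, 2X) is a bijection from X^{ℓ,1}_{YM}(G) = {(V,c,X) ∈ G^{2ℓ}×G×𝔤 | V ∈ (G_X)^{2ℓ}, Ad(c)(X) = -X, 𝔪(V) = exp(X)·c²} onto the fixed-point set of τ in Z^{ℓ,1}_{YM}(G). -/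
variable {G 𝔤 : Type*} [Group G] [TopologicalSpace G] [IsTopologicalGroup G]
  [AddCommGroup 𝔤] [Module ℝ 𝔤]

open scoped commutatorElement

/-- The set `Z^{ℓ,1}_{YM}(G)`. -/
def Z1set (L : LieExpAd G 𝔤) (ℓ : ℕ) :
    Set ((Fin ℓ → G × G) × G × (Fin ℓ → G × G) × G × 𝔤) :=
  {z | memZ1 L z.1 z.2.1 z.2.2.1 z.2.2.2.1 z.2.2.2.2}

/-- `τ(V,c,V̄,c̄,X) = (V̄,c̄,V,c,-Ad(c̄)X)`. -/
def tau1 (L : LieExpAd G 𝔤) {ℓ : ℕ}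
    (z : (Fin ℓ → G × G) × G × (Fin ℓ → G × G) × G × 𝔤) :
    (Fin ℓ → G × G) × G × (Fin ℓ → G × G) × G × 𝔤 :=
  (z.2.2.1, z.2.2.2.1, z.1, z.2.1, -(L.Ad z.2.2.2.1 z.2.2.2.2))

/-- The representation variety `X^{ℓ,1}_{YM}(G)`. -/
def X1set (L : LieExpAd G 𝔤) (ℓ : ℕ) : Set ((Fin ℓ → G × G) × G × 𝔤) :=
  {w | tupleStab L w.2.2 w.1 ∧ L.Ad w.2.1 w.2.2 = -w.2.2 ∧
    mm w.1 = L.exp w.2.2 * w.2.1 ^ 2}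

/-!
A fixed point of `τ` has `V̄ = V`, `c̄ = c` and `Ad(c)X = -X`. For such data the two
`Z`-relations collapse to the single relation `𝔪(V) = exp(X/2)·c²`: since `Ad(c⁻¹)X = -X` as
well, `exp(-X/2) = c⁻¹ exp(X/2) c`, so `c·exp(-X/2)·c = exp(X/2)·c²`. Likewise conjugation by `c`
maps `G_X` onto `G_{Ad(c)X} = G_{-X} = G_X`, so the condition on `cVc⁻¹` repeats the one on `V`.
Halving `X` then identifies the fixed points with `X^{ℓ,1}_{YM}(G)`.
-/

section Stabilizer

omit [IsTopologicalGroup G]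

variable (L : LieExpAd G 𝔤)

theorem LieExpAd.Ad_inv_eq_neg {c : G} {X : 𝔤} (hc : L.Ad c X = -X) : L.Ad c⁻¹ X = -X := by
  rw [map_inv, LinearEquiv.coe_inv, LinearEquiv.symm_apply_eq, map_neg, hc, neg_neg]

theorem LieExpAd.Ad_smul_eq_neg_iff {c : G} {X : 𝔤} {r : ℝ} (hr : r ≠ 0) :
    L.Ad c (r • X) = -(r • X) ↔ L.Ad c X = -X := by
  rw [map_smul, ← smul_neg, smul_right_inj hr]

theorem LieExpAd.exp_neg_eq_conj {c : G} {X : 𝔤} (hc : L.Ad c X = -X) :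
    L.exp (-X) = c⁻¹ * L.exp X * c := by
  rw [← L.Ad_inv_eq_neg hc, L.exp_Ad, inv_inv]

theorem stab_smul {r : ℝ} (hr : r ≠ 0) (X : 𝔤) : stab L (r • X) = stab L X := by
  ext g
  simp only [stab, Set.mem_ofPred_eq, map_smul, smul_right_inj hr]

theorem stab_neg (X : 𝔤) : stab L (-X) = stab L X := by
  ext g
  simp only [stab, Set.mem_ofPred_eq, map_neg, neg_inj]

theorem conj_mem_stab_Ad_iff {g : G} (c : G) (X : 𝔤) :
    c * g * c⁻¹ ∈ stab L (L.Ad c X) ↔ g ∈ stab L X := by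
  simp only [stab, Set.mem_ofPred_eq, map_mul, map_inv, LinearEquiv.mul_apply,
    LinearEquiv.coe_inv, LinearEquiv.symm_apply_apply, EmbeddingLike.apply_eq_iff_eq]

theorem conj_mem_stab_iff {c g : G} {X : 𝔤} (hc : L.Ad c X = -X) :
    c * g * c⁻¹ ∈ stab L X ↔ g ∈ stab L X := by
  have h := conj_mem_stab_Ad_iff L (g := g) c X
  rwa [hc, stab_neg] at h

variable {ℓ : ℕ}

theorem tupleStab_smul {r : ℝ} (hr : r ≠ 0) (X : 𝔤) (V : Fin ℓ → G × G) :
    tupleStab L (r • X) V ↔ tupleStab L X V := by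
  simp only [tupleStab, stab_smul L hr]

theorem tupleStab_conjT_iff {c : G} {X : 𝔤} (hc : L.Ad c X = -X) (V : Fin ℓ → G × G) :
    tupleStab L X (conjT c V) ↔ tupleStab L X V := by
  simp only [tupleStab, conjT, conj_mem_stab_iff L hc]

end Stabilizer

section Diagonal

variable {α M : Type*} [AddCommGroup M] [Module ℝ M] {ℓ : ℕ}

def diagZ1 (w : (Fin ℓ → α × α) × α × M) : (Fin ℓ → α × α) × α × (Fin ℓ → α × α) × α × M :=
  (w.1, w.2.1, w.1, w.2.1, (2 : ℝ) • w.2.2)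

theorem diagZ1_injective : Function.Injective (diagZ1 : (Fin ℓ → α × α) × α × M → _) := by
  rintro ⟨V, c, X⟩ ⟨V', c', X'⟩ h
  simp only [diagZ1, Prod.mk.injEq] at h
  obtain ⟨rfl, rfl, -, -, h⟩ := h
  rw [smul_right_inj (two_ne_zero' ℝ)] at h
  rw [h]

end Diagonal

section FixedPoints

omit [IsTopologicalGroup G]

variable (L : LieExpAd G 𝔤) {ℓ : ℕ}

theorem tau1_eq_self_iff {V Vb : Fin ℓ → G × G} {c cb : G} {X : 𝔤} :
    tau1 L (V, c, Vb, cb, X) = (V, c, Vb, cb, X) ↔ Vb = V ∧ cb = c ∧ L.Ad c X = -X := by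
  simp only [tau1, Prod.mk.injEq]
  constructor
  · rintro ⟨rfl, rfl, -, -, h⟩
    exact ⟨rfl, rfl, neg_eq_iff_eq_neg.mp h⟩
  · rintro ⟨rfl, rfl, h⟩
    exact ⟨rfl, rfl, rfl, rfl, by rw [h, neg_neg]⟩

theorem memZ1_diag_iff {V : Fin ℓ → G × G} {c : G} {X : 𝔤} (hc : L.Ad c X = -X) :
    memZ1 L V c V c ((2 : ℝ) • X) ↔ tupleStab L X V ∧ mm V = L.exp X * c ^ 2 := by
  have half_two : (1 / 2 : ℝ) • (2 : ℝ) • X = X := by rw [one_div, inv_smul_smul₀ two_ne_zero]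
  have hmirror : c * L.exp (-X) * c = L.exp X * (c * c) := by
    rw [L.exp_neg_eq_conj hc]
    group
  simp only [memZ1, half_two, hmirror, tupleStab_smul L two_ne_zero, tupleStab_conjT_iff L hc,
    sq, and_self_left, and_self]

theorem image_diagZ1_X1set : diagZ1 '' X1set L ℓ = {z ∈ Z1set L ℓ | tau1 L z = z} := by
  ext ⟨V, c, Vb, cb, Y⟩
  simp only [Set.mem_image, Set.mem_ofPred_eq, Z1set, tau1_eq_self_iff]
  constructor
  · rintro ⟨⟨V, c, X⟩, ⟨hV, hc, hm⟩, h⟩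
    simp only [diagZ1, Prod.mk.injEq] at h
    obtain ⟨rfl, rfl, rfl, rfl, rfl⟩ := h
    exact ⟨(memZ1_diag_iff L hc).2 ⟨hV, hm⟩, rfl, rfl, (L.Ad_smul_eq_neg_iff two_ne_zero).2 hc⟩
  · rintro ⟨hz, rfl, rfl, hc⟩
    obtain ⟨X, rfl⟩ : ∃ X : 𝔤, Y = (2 : ℝ) • X :=
      ⟨(1 / 2 : ℝ) • Y, by rw [smul_smul]; norm_num⟩
    rw [L.Ad_smul_eq_neg_iff two_ne_zero] at hc
    obtain ⟨hV, hm⟩ := (memZ1_diag_iff L hc).1 hz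
    exact ⟨(_, _, X), ⟨hV, hc, hm⟩, rfl⟩

end FixedPoints

theorem X1_bij_fixed_general (L : LieExpAd G 𝔤) (ℓ : ℕ) :
    Set.BijOn
      (fun w : (Fin ℓ → G × G) × G × 𝔤 =>
        ((w.1, w.2.1, w.1, w.2.1, (2 : ℝ) • w.2.2) :
          (Fin ℓ → G × G) × G × (Fin ℓ → G × G) × G × 𝔤))
      (X1set L ℓ) {z ∈ Z1set L ℓ | tau1 L z = z} := by
  rw [← image_diagZ1_X1set]
  exact diagZ1_injective.injOn.bijOn_image

/-- `(V,c,X) ↦ (V,c,V,c,2X)` is a bijection from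
`X^{ℓ,1}_{YM}(G)` onto the fixed-point set of `τ` in `Z^{ℓ,1}_{YM}(G)`. -/
theorem X1_bij_fixed [CompactSpace G] (L : LieExpAd G 𝔤) (ℓ : ℕ) :
    Set.BijOn
      (fun w : (Fin ℓ → G × G) × G × 𝔤 =>
        ((w.1, w.2.1, w.1, w.2.1, (2 : ℝ) • w.2.2) :
          (Fin ℓ → G × G) × G × (Fin ℓ → G × G) × G × 𝔤))
      (X1set L ℓ) {z ∈ Z1set L ℓ | tau1 L z = z} :=
  X1_bij_fixed_general L ℓ
end
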